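/- arXiv:math/0202031 — 2 statements merged into one kernel-verified Lean document; each statement's English description precedes it below -/
import Mathlib

section
/- Let c > 0 and let B_{ab} (0 ≤ a,b ≤ 3) be real constants satisfying the null condition: B_{ab} ξ_a ξ_b = 0 whenever ξ₀²/c² − ξ₁² − ξ₂² − ξ₃² = 0. Then there is a constant C' such that for all smooth scalar functions u, v on ℝ×ℝ³ and all (t,x) with t ≥ 0: |B_{ab} ∂_a u ∂_b v| ≤ C'⟨r⟩^{−1}( |Γu|·|∂v| + |∂u|·|Γv| ) + C'(⟨ct−r⟩/⟨t+r⟩)·|∂u|·|∂v|, where |Γu| = Σ over the eight fields Γ of |Γ_i u| and |∂u| is the euclidean norm of the space-time gradient. -/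
open MeasureTheory Real Finset

noncomputable section

/-- Points of space-time `ℝ×ℝ³`, written `X = (x₀,x₁,x₂,x₃)` with `x₀ = t`. -/
abbrev Pt : Type := Fin 4 → ℝ
/-- Points of space `ℝ³`. -/
abbrev Sp : Type := Fin 3 → ℝ

/-- Space-time partial derivative `∂_a`. -/
def pd (a : Fin 4) (u : Pt → ℝ) : Pt → ℝ := fun X => fderiv ℝ u X (Pi.single a 1)

/-- Rotation field `Ω_{ij} = x_i ∂_j - x_j ∂_i` (space-time indices). -/
def rot (i j : Fin 4) (u : Pt → ℝ) : Pt → ℝ := fun X => X i * pd j u X - X j * pd i u X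

/-- Scaling field `S = t ∂_t + x·∇_x = x^a ∂_a`. -/
def scal (u : Pt → ℝ) : Pt → ℝ := fun X => ∑ a, X a * pd a u X

/-- The eight vector fields `Γ = (∂, Ω, S)`. -/
def Gam : Fin 8 → (Pt → ℝ) → Pt → ℝ :=
  ![pd 0, pd 1, pd 2, pd 3, rot 1 2, rot 1 3, rot 2 3, scal]

/-- `Γ^α` for a multi-index `α` (a word in the eight fields) of length `m`. -/
def GamComp : ∀ {m : ℕ}, (Fin m → Fin 8) → (Pt → ℝ) → Pt → ℝ
  | 0, _, u => u
  | _ + 1, α, u => Gam (α 0) (GamComp (fun i => α i.succ) u)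

/-- Euclidean length `r = |x|` of a spatial point. -/
def rad (x : Sp) : ℝ := Real.sqrt (∑ i, (x i) ^ 2)

/-- Japanese bracket `⟨z⟩ = (1+z²)^{1/2}`. -/
def jb (z : ℝ) : ℝ := Real.sqrt (1 + z ^ 2)

/-- Euclidean norm `|∂u|` of the space-time gradient. -/
def gradNorm (u : Pt → ℝ) (X : Pt) : ℝ := Real.sqrt (∑ a, (pd a u X) ^ 2)

/-- The unit-speed d'Alembertian `□ = ∂_t² - Δ_x`. -/
def box1 (u : Pt → ℝ) : Pt → ℝ := fun X =>
  pd 0 (pd 0 u) X - ∑ j : Fin 3, pd j.succ (pd j.succ u) X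

/-- The d'Alembertian `∂_t² - c²Δ_x` with speed `c`. -/
def boxc (c : ℝ) (u : Pt → ℝ) : Pt → ℝ := fun X =>
  pd 0 (pd 0 u) X - c ^ 2 * ∑ j : Fin 3, pd j.succ (pd j.succ u) X


set_option maxHeartbeats 4000000

lemma jb_pos (z : ℝ) : 0 < jb z := Real.sqrt_pos.2 (by positivity)
lemma abs_le_jb (z : ℝ) : |z| ≤ jb z := by
  rw [jb, ← Real.sqrt_sq_eq_abs]; exact Real.sqrt_le_sqrt (by linarith)
lemma jb_le_one_add (z : ℝ) : jb z ≤ 1 + |z| := by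
  rw [jb]
  have h : 1 + z ^ 2 ≤ (1 + |z|) ^ 2 := by
    have := abs_nonneg z
    have := sq_abs z
    nlinarith [abs_nonneg z, sq_abs z]
  calc Real.sqrt (1 + z^2) ≤ Real.sqrt ((1+|z|)^2) := Real.sqrt_le_sqrt h
    _ = 1 + |z| := Real.sqrt_sq (by positivity)
lemma jb_mono {a b : ℝ} (h : |a| ≤ |b|) : jb a ≤ jb b := by
  apply Real.sqrt_le_sqrt
  have h2 : |a| * |a| ≤ |b| * |b| := mul_self_le_mul_self (abs_nonneg a) h
  linarith only [h2, sq_abs a, sq_abs b]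

def nq (X : Fin 4 → ℝ) : ℝ := Real.sqrt (X 0 ^ 2 + X 1 ^ 2 + X 2 ^ 2 + X 3 ^ 2)

lemma nq_nonneg (X : Fin 4 → ℝ) : 0 ≤ nq X := Real.sqrt_nonneg _
lemma abs_le_nq (X : Fin 4 → ℝ) (a : Fin 4) : |X a| ≤ nq X := by
  rw [nq, ← Real.sqrt_sq_eq_abs]
  apply Real.sqrt_le_sqrt
  fin_cases a <;> simp <;>
    linarith only [sq_nonneg (X 0), sq_nonneg (X 1), sq_nonneg (X 2), sq_nonneg (X 3)]
lemma nq_le_sum (X : Fin 4 → ℝ) : nq X ≤ |X 0| + |X 1| + |X 2| + |X 3| := by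
  rw [nq]
  have h : X 0 ^2 + X 1^2 + X 2^2 + X 3^2 ≤ (|X 0| + |X 1| + |X 2| + |X 3|)^2 := by
    linarith only [sq_abs (X 0), sq_abs (X 1), sq_abs (X 2), sq_abs (X 3),
      mul_nonneg (abs_nonneg (X 0)) (abs_nonneg (X 1)),
      mul_nonneg (abs_nonneg (X 0)) (abs_nonneg (X 2)),
      mul_nonneg (abs_nonneg (X 0)) (abs_nonneg (X 3)),
      mul_nonneg (abs_nonneg (X 1)) (abs_nonneg (X 2)),
      mul_nonneg (abs_nonneg (X 1)) (abs_nonneg (X 3)),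
      mul_nonneg (abs_nonneg (X 2)) (abs_nonneg (X 3))]
  calc Real.sqrt _ ≤ Real.sqrt ((|X 0| + |X 1| + |X 2| + |X 3|)^2) := Real.sqrt_le_sqrt h
    _ = _ := Real.sqrt_sq (by positivity)

lemma sum4_bound (B : Fin 4 → Fin 4 → ℝ) (P Q : Fin 4 → ℝ) (p q : ℝ)
    (hp : ∀ a, |P a| ≤ p) (hq : ∀ b, |Q b| ≤ q) :
    |∑ a, ∑ b, B a b * P a * Q b| ≤ (∑ a, ∑ b, |B a b|) * (p * q) := by
  have hp0 : 0 ≤ p := le_trans (abs_nonneg _) (hp 0)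
  have hq0 : 0 ≤ q := le_trans (abs_nonneg _) (hq 0)
  calc |∑ a, ∑ b, B a b * P a * Q b| ≤ ∑ a, |∑ b, B a b * P a * Q b| :=
        Finset.abs_sum_le_sum_abs _ _
    _ ≤ ∑ a, ∑ b, |B a b * P a * Q b| := by
        apply Finset.sum_le_sum; intro a _; exact Finset.abs_sum_le_sum_abs _ _
    _ ≤ ∑ a, ∑ b, |B a b| * (p * q) := by
        apply Finset.sum_le_sum; intro a _; apply Finset.sum_le_sum; intro b _
        rw [abs_mul, abs_mul, mul_assoc]
        exact mul_le_mul_of_nonneg_left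
          (mul_le_mul (hp a) (hq b) (abs_nonneg _) hp0) (abs_nonneg _)
    _ = (∑ a, ∑ b, |B a b|) * (p * q) := by rw [Finset.sum_mul]; congr 1; ext a; rw [Finset.sum_mul]

lemma abs_le_of_sq {x r : ℝ} (h : x ^ 2 ≤ r ^ 2) (hr : 0 ≤ r) : |x| ≤ r := by
  rw [← Real.sqrt_sq_eq_abs, ← Real.sqrt_sq hr]; exact Real.sqrt_le_sqrt h

/-- The Γ-sum evaluated algebraically. -/
def Gq (t : ℝ) (x : Fin 3 → ℝ) (X : Fin 4 → ℝ) : ℝ :=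
  |X 0| + |X 1| + |X 2| + |X 3| + |x 0 * X 2 - x 1 * X 1| + |x 0 * X 3 - x 2 * X 1|
    + |x 1 * X 3 - x 2 * X 2| + |t * X 0 + x 0 * X 1 + x 1 * X 2 + x 2 * X 3|

lemma Gq_nonneg (t : ℝ) (x : Fin 3 → ℝ) (X : Fin 4 → ℝ) : 0 ≤ Gq t x X := by
  unfold Gq; positivity

lemma nq_le_Gq (t : ℝ) (x : Fin 3 → ℝ) (X : Fin 4 → ℝ) : nq X ≤ Gq t x X := by
  have h0 := nq_le_sum X
  unfold Gq
  have h1 := abs_nonneg (x 0 * X 2 - x 1 * X 1)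
  have h2 := abs_nonneg (x 0 * X 3 - x 2 * X 1)
  have h3 := abs_nonneg (x 1 * X 3 - x 2 * X 2)
  have h4 := abs_nonneg (t * X 0 + x 0 * X 1 + x 1 * X 2 + x 2 * X 3)
  linarith only [h0, h1, h2, h3, h4]

def Zv (N X : Fin 4 → ℝ) : Fin 4 → ℝ := fun a => X a - X 0 * N a
@[simp] lemma Zv_apply (N X : Fin 4 → ℝ) (a : Fin 4) : Zv N X a = X a - X 0 * N a := rfl


lemma abs_add_three' (a b c : ℝ) : |a + b + c| ≤ |a| + |b| + |c| := abs_add_three a b c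

lemma tri_bound (c r D G nV E1 E2 S V0 w xa xb xk : ℝ) (hc : 0 < c) (hr : 0 ≤ r)
    (hE : |E1| + |E2| + |S| ≤ G) (hV0 : |V0| ≤ nV) (hw : |w| ≤ D)
    (hxa : |xa| ≤ r) (hxb : |xb| ≤ r) (hxk : |xk| ≤ r) :
    |c*xa*E1 + c*xb*E2 + xk*(c*S - w*V0)| ≤ (c*G + D*nV)*r := by
  have hD : 0 ≤ D := le_trans (abs_nonneg w) hw
  have h1 : |c*xa*E1| ≤ c*r*|E1| := by
    rw [abs_mul, abs_mul, abs_of_pos hc]; gcongr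
  have h2 : |c*xb*E2| ≤ c*r*|E2| := by
    rw [abs_mul, abs_mul, abs_of_pos hc]; gcongr
  have h3 : |xk*(c*S - w*V0)| ≤ r*(c*|S| + D*|V0|) := by
    rw [abs_mul]
    have h4 : |c*S - w*V0| ≤ c*|S| + D*|V0| := by
      rw [sub_eq_add_neg]
      refine (abs_add_le _ _).trans ?_
      rw [abs_neg, abs_mul, abs_mul, abs_of_pos hc]
      have h6 := mul_le_mul_of_nonneg_right hw (abs_nonneg V0)
      linarith only [h6]
    have h5 : 0 ≤ c*|S| + D*|V0| := by positivity
    exact mul_le_mul hxk h4 (abs_nonneg _) hr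
  refine (abs_add_three' _ _ _).trans ?_
  have q1 : 0 ≤ c * r := mul_nonneg hc.le hr
  have q2 : 0 ≤ D * r := mul_nonneg hD hr
  linarith only [h1, h2, h3,
    mul_nonneg q1 (by linarith only [hE] : (0:ℝ) ≤ G - (|E1| + |E2| + |S|)),
    mul_nonneg q2 (by linarith only [hV0] : (0:ℝ) ≤ nV - |V0|)]

lemma div_step (c r D G nV : ℝ) (hc : 0 < c) (hr : 0 < r) (Z : ℝ)
    (h : |Z| * (c*r^2) ≤ (c*G + D*nV)*r) : |Z| ≤ (G + D/c*nV) * r⁻¹ := by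
  have hcr2 : (0:ℝ) < c*r^2 := by positivity
  rw [← le_div_iff₀ hcr2] at h
  calc |Z| ≤ ((c*G + D*nV)*r)/(c*r^2) := h
    _ = (G + D/c*nV) * r⁻¹ := by field_simp

lemma key (c : ℝ) (hc : 0 < c) (B : Fin 4 → Fin 4 → ℝ)
    (hnull : ∀ ξ : Fin 4 → ℝ,
      (ξ 0) ^ 2 / c ^ 2 - (ξ 1) ^ 2 - (ξ 2) ^ 2 - (ξ 3) ^ 2 = 0 →
      ∑ a, ∑ b, B a b * ξ a * ξ b = 0) :
    ∃ C' : ℝ, 0 < C' ∧ ∀ (t r : ℝ) (x : Fin 3 → ℝ) (X Y : Fin 4 → ℝ),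
      0 ≤ t → 0 ≤ r → (x 0)^2 + (x 1)^2 + (x 2)^2 = r^2 →
      |∑ a, ∑ b, B a b * X a * Y b| ≤
        C' * (jb r)⁻¹ * (Gq t x X * nq Y + nq X * Gq t x Y)
          + C' * (jb (c*t - r) / jb (t + r)) * nq X * nq Y := by
  set M : ℝ := ∑ a, ∑ b, |B a b| with hMdef
  have hM0 : 0 ≤ M := Finset.sum_nonneg fun a _ => Finset.sum_nonneg fun b _ => abs_nonneg _
  set κ : ℝ := (4 + 2*c)/(3*c) with hκdef
  have hκ0 : 0 < κ := by positivity
  set R : ℝ := 1 + 4/c with hRdef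
  have hR1 : (1:ℝ) ≤ R := by
    have h4c : 0 < 4/c := by positivity
    rw [hRdef]; linarith only [h4c]
  have hjbR : 0 < jb R := jb_pos R
  set C' : ℝ := M * jb R + 4*M/c + M*(2+1/c)*(4 + 3*(2+κ)/c) + 1 with hCdef
  have hA1 : 0 ≤ M * jb R := mul_nonneg hM0 hjbR.le
  have hA2 : 0 ≤ 4*M/c := by positivity
  have hA3 : 0 ≤ M*(2+1/c)*(4 + 3*(2+κ)/c) := by positivity
  have hC0 : 0 < C' := by rw [hCdef]; linarith only [hA1, hA2, hA3]
  have h1c : (0:ℝ) < 2 + 1/c := by positivity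
  have hCjbR : M * jb R ≤ C' := by rw [hCdef]; linarith only [hA2, hA3]
  have hCc : 4*M/c ≤ C' := by rw [hCdef]; linarith only [hA1, hA3]
  have hC4 : 4*(M*(2+1/c)) ≤ C' := by
    rw [hCdef]
    have h6 : 0 ≤ (3*(2+κ)/c) := by positivity
    linarith only [hA1, hA2, mul_nonneg (mul_nonneg hM0 h1c.le) h6]
  have hC5 : (3*(2+κ)/c)*(M*(2+1/c)) ≤ C' := by
    rw [hCdef]
    linarith only [hA1, hA2, mul_nonneg hM0 h1c.le]
  clear_value M κ R C'
  refine ⟨C', hC0, ?_⟩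
  intro t r x X Y ht hr hr2
  have hnX := nq_nonneg X
  have hnY := nq_nonneg Y
  have hGX := Gq_nonneg t x X
  have hGY := Gq_nonneg t x Y
  have hGXn := nq_le_Gq t x X
  have hGYn := nq_le_Gq t x Y
  have hjr := jb_pos r
  have hjq := jb_pos (c*t - r)
  have hjs := jb_pos (t + r)
  have crude : |∑ a, ∑ b, B a b * X a * Y b| ≤ M * (nq X * nq Y) := by
    rw [hMdef]; exact sum4_bound B X Y _ _ (abs_le_nq X) (abs_le_nq Y)
  have hterm2 : 0 ≤ C' * (jb (c*t - r) / jb (t + r)) * nq X * nq Y := by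
    apply mul_nonneg (mul_nonneg (mul_nonneg hC0.le (div_nonneg hjq.le hjs.le)) hnX) hnY
  have hterm1 : 0 ≤ C' * (jb r)⁻¹ * (Gq t x X * nq Y + nq X * Gq t x Y) := by
    apply mul_nonneg (mul_nonneg hC0.le (inv_nonneg.2 hjr.le))
    exact add_nonneg (mul_nonneg hGX hnY) (mul_nonneg hnX hGY)
  rcases le_or_gt r R with hrR | hrR
  · -- Case A : r small
    have h2 : (jb R)⁻¹ ≤ (jb r)⁻¹ := by
      apply inv_anti₀ hjr
      apply jb_mono
      rw [abs_of_nonneg hr, abs_of_nonneg (by linarith : (0:ℝ) ≤ R)]; exact hrR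
    have h3 : M ≤ C' * (jb R)⁻¹ := by
      rw [← div_eq_mul_inv, le_div_iff₀ hjbR]
      exact hCjbR
    have e1 : M * (nq X * nq Y) ≤ C' * (jb r)⁻¹ * (Gq t x X * nq Y + nq X * Gq t x Y) := by
      calc M * (nq X * nq Y) ≤ (C' * (jb R)⁻¹) * (nq X * nq Y) :=
            mul_le_mul_of_nonneg_right h3 (mul_nonneg hnX hnY)
        _ ≤ (C' * (jb r)⁻¹) * (nq X * nq Y) := by
            apply mul_le_mul_of_nonneg_right _ (mul_nonneg hnX hnY)
            exact mul_le_mul_of_nonneg_left h2 hC0.le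
        _ ≤ C' * (jb r)⁻¹ * (Gq t x X * nq Y + nq X * Gq t x Y) := by
            apply mul_le_mul_of_nonneg_left _ (mul_nonneg hC0.le (inv_nonneg.2 hjr.le))
            linarith only [mul_le_mul_of_nonneg_right hGXn hnY, mul_nonneg hnX hGY]
    linarith only [crude, e1, hterm2]
  rcases le_or_gt ((c/4) * jb (t + r)) (jb (c*t - r)) with hB | hB
  · -- Case B : away from the light cone
    have h4 : c/4 ≤ jb (c*t - r) / jb (t + r) := (le_div_iff₀ hjs).2 hB
    have h5 : M ≤ C' * (c/4) := by
      rw [div_le_iff₀ hc] at hCc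
      linarith only [hCc]
    have e1 : M * (nq X * nq Y) ≤ C' * (jb (c*t - r) / jb (t + r)) * nq X * nq Y := by
      calc M * (nq X * nq Y) ≤ (C' * (c/4)) * (nq X * nq Y) :=
            mul_le_mul_of_nonneg_right h5 (mul_nonneg hnX hnY)
        _ ≤ (C' * (jb (c*t - r) / jb (t + r))) * (nq X * nq Y) := by
            apply mul_le_mul_of_nonneg_right _ (mul_nonneg hnX hnY)
            exact mul_le_mul_of_nonneg_left h4 hC0.le
        _ = C' * (jb (c*t - r) / jb (t + r)) * nq X * nq Y := by ring
    linarith only [crude, e1, hterm1]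
  · -- Case C : near the light cone, r large — null structure
    have hr1 : (1:ℝ) ≤ r := le_trans hR1 hrR.le
    have hrpos : (0:ℝ) < r := lt_of_lt_of_le zero_lt_one hr1
    have hxb : ∀ i : Fin 3, |x i| ≤ r := by
      intro i
      apply abs_le_of_sq _ hr
      fin_cases i <;> simp <;>
        linarith only [hr2, sq_nonneg (x 0), sq_nonneg (x 1), sq_nonneg (x 2)]
    -- geometry of the region
    have hjsub : jb (t + r) ≤ 1 + (t + r) := by
      have := jb_le_one_add (t + r)
      rwa [abs_of_nonneg (by linarith)] at this
    have hct : c*t ≤ r + jb (c*t - r) := by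
      have h := le_abs_self (c*t - r)
      have h' := abs_le_jb (c*t - r)
      linarith only [h, h']
    have htk : t ≤ κ * r := by
      have h6 : (c/4) * jb (t+r) ≤ (c/4)*(1 + (t+r)) :=
        mul_le_mul_of_nonneg_left hjsub (by positivity)
      have h7 : c*t ≤ r + (c/4)*(1 + (t+r)) := by linarith only [hct, hB.le, h6]
      rw [hκdef, div_mul_eq_mul_div, le_div_iff₀ (by positivity : (0:ℝ) < 3*c)]
      linarith only [h7, mul_le_mul_of_nonneg_left hr1 (by positivity : (0:ℝ) ≤ c/4)]
    have hjtr2 : jb (t + r) ≤ (2 + κ) * r := by linarith only [hjsub, htk, hr1]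
    have hrinv1 : r⁻¹ ≤ 2 * (jb r)⁻¹ := by
      have hjr2 : jb r ≤ 2*r := by
        have h7 := jb_le_one_add r
        rw [abs_of_nonneg hr] at h7
        linarith only [h7, hr1]
      have h8 : (2*r)⁻¹ ≤ (jb r)⁻¹ := inv_anti₀ hjr hjr2
      have h9 : r⁻¹ = 2 * (2*r)⁻¹ := by field_simp
      linarith only [h8, h9]
    have hrinv2 : |c*t - r| * r⁻¹ ≤ (2 + κ) * (jb (c*t-r) / jb (t+r)) := by
      have h9 : r⁻¹ ≤ (2+κ) / jb (t+r) := by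
        rw [le_div_iff₀ hjs, inv_mul_le_iff₀ hrpos]
        linarith only [hjtr2]
      calc |c*t - r| * r⁻¹ ≤ jb (c*t-r) * ((2+κ)/jb (t+r)) :=
            mul_le_mul (abs_le_jb _) h9 (inv_nonneg.2 hrpos.le) hjq.le
        _ = (2+κ) * (jb (c*t-r)/jb (t+r)) := by ring
    -- the null frame
    set N : Fin 4 → ℝ := ![1, -(x 0)/(c*r), -(x 1)/(c*r), -(x 2)/(c*r)] with hNdef
    have hN0 : N 0 = 1 := rfl
    have hN1 : N 1 = -(x 0)/(c*r) := rfl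
    have hN2 : N 2 = -(x 1)/(c*r) := rfl
    have hN3 : N 3 = -(x 2)/(c*r) := rfl
    have hNnull : ∑ a, ∑ b, B a b * N a * N b = 0 := by
      apply hnull
      rw [hN0, hN1, hN2, hN3]
      have hcne := hc.ne'
      have hrne := hrpos.ne'
      field_simp
      linear_combination (-1) * hr2
    have hNb : ∀ a, |N a| ≤ 1 + 1/c := by
      have hgen : ∀ v : ℝ, |v| ≤ r → |(-v/(c*r))| ≤ 1 + 1/c := by
        intro v hv
        rw [abs_div, abs_neg, abs_mul, abs_of_pos hc, abs_of_pos hrpos]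
        have h10 : |v|/(c*r) ≤ r/(c*r) := by gcongr
        have h11 : r/(c*r) = 1/c := by
          rw [mul_comm c r, ← div_div, div_self hrpos.ne']
        have h12 : (0:ℝ) < 1/c := by positivity
        rw [h11] at h10
        linarith only [h10, h12]
      intro a
      fin_cases a
      · show |N 0| ≤ 1 + 1/c
        have h12 : (0:ℝ) < 1/c := by positivity
        rw [hN0, abs_one]; linarith only [h12]
      · show |N 1| ≤ 1 + 1/c
        rw [hN1]; exact hgen _ (hxb 0)
      · show |N 2| ≤ 1 + 1/c
        rw [hN2]; exact hgen _ (hxb 1)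
      · show |N 3| ≤ 1 + 1/c
        rw [hN3]; exact hgen _ (hxb 2)
    have hNb2 : ∀ a, |N a| ≤ 2 + 1/c := by
      intro a
      have h12 : (0:ℝ) < 1/c := by positivity
      linarith only [h12, hNb a]
    -- bound on the tangential/good part
    have hZv : ∀ V : Fin 4 → ℝ, ∀ a,
        |Zv N V a| ≤ (Gq t x V + |c*t - r|/c * nq V) * r⁻¹ := by
      intro V a
      have hGV := Gq_nonneg t x V
      have hnV := nq_nonneg V
      have hS0 : |t * V 0 + x 0 * V 1 + x 1 * V 2 + x 2 * V 3| ≤ Gq t x V := by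
        unfold Gq
        have a1 := abs_nonneg (V 0); have a2 := abs_nonneg (V 1)
        have a3 := abs_nonneg (V 2); have a4 := abs_nonneg (V 3)
        have a5 := abs_nonneg (x 0 * V 2 - x 1 * V 1)
        have a6 := abs_nonneg (x 0 * V 3 - x 2 * V 1)
        have a7 := abs_nonneg (x 1 * V 3 - x 2 * V 2)
        linarith only [a1, a2, a3, a4, a5, a6, a7]
      have hcr2 : (0:ℝ) < c*r^2 := by positivity
      have habs : ∀ z w : ℝ, z * (c*r^2) = w → |z| * (c*r^2) = |w| := by
        intro z w h
        rw [← h, abs_mul, abs_of_pos hcr2]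
      fin_cases a
      · -- a = 0
        show |Zv N V 0| ≤ (Gq t x V + |c*t - r|/c * nq V) * r⁻¹
        have hz : Zv N V 0 = 0 := by rw [Zv_apply, hN0]; ring
        rw [hz, abs_zero]
        have : (0:ℝ) ≤ |c*t - r|/c * nq V := by positivity
        positivity
      · -- a = 1
        show |Zv N V 1| ≤ (Gq t x V + |c*t - r|/c * nq V) * r⁻¹
        have e : Zv N V 1 * (c*r^2) = c*(x 1)*(x 1*V 1 - x 0*V 2) + c*(x 2)*(x 2*V 1 - x 0*V 3)
            + (x 0)*(c*(t*V 0 + x 0*V 1 + x 1*V 2 + x 2*V 3) - (c*t-r)*V 0) := by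
          rw [Zv_apply, hN1]
          have hcne := hc.ne'
          have hrne := hrpos.ne'
          field_simp
          linear_combination (-(V 1*c)) * hr2
        have hE : |x 1*V 1 - x 0*V 2| + |x 2*V 1 - x 0*V 3|
            + |t*V 0 + x 0*V 1 + x 1*V 2 + x 2*V 3| ≤ Gq t x V := by
          rw [abs_sub_comm (x 1*V 1) (x 0*V 2), abs_sub_comm (x 2*V 1) (x 0*V 3)]
          unfold Gq
          have a1 := abs_nonneg (V 0); have a2 := abs_nonneg (V 1)
          have a3 := abs_nonneg (V 2); have a4 := abs_nonneg (V 3)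
          have a7 := abs_nonneg (x 1 * V 3 - x 2 * V 2)
          linarith only [a1, a2, a3, a4, a7]
        have tb := tri_bound c r (|c*t - r|) (Gq t x V) (nq V) (x 1*V 1 - x 0*V 2)
          (x 2*V 1 - x 0*V 3) (t*V 0 + x 0*V 1 + x 1*V 2 + x 2*V 3) (V 0) (c*t - r)
          (x 1) (x 2) (x 0) hc hr hE (abs_le_nq V 0) (le_refl _) (hxb 1) (hxb 2) (hxb 0)
        exact div_step c r (|c*t - r|) (Gq t x V) (nq V) hc hrpos _
          ((habs _ _ e) ▸ tb)
      · -- a = 2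
        show |Zv N V 2| ≤ (Gq t x V + |c*t - r|/c * nq V) * r⁻¹
        have e : Zv N V 2 * (c*r^2) = c*(x 0)*(x 0*V 2 - x 1*V 1) + c*(x 2)*(x 2*V 2 - x 1*V 3)
            + (x 1)*(c*(t*V 0 + x 0*V 1 + x 1*V 2 + x 2*V 3) - (c*t-r)*V 0) := by
          rw [Zv_apply, hN2]
          have hcne := hc.ne'
          have hrne := hrpos.ne'
          field_simp
          linear_combination (-(V 2*c)) * hr2
        have hE : |x 0*V 2 - x 1*V 1| + |x 2*V 2 - x 1*V 3|
            + |t*V 0 + x 0*V 1 + x 1*V 2 + x 2*V 3| ≤ Gq t x V := by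
          rw [abs_sub_comm (x 2*V 2) (x 1*V 3)]
          unfold Gq
          have a1 := abs_nonneg (V 0); have a2 := abs_nonneg (V 1)
          have a3 := abs_nonneg (V 2); have a4 := abs_nonneg (V 3)
          have a6 := abs_nonneg (x 0 * V 3 - x 2 * V 1)
          linarith only [a1, a2, a3, a4, a6]
        have tb := tri_bound c r (|c*t - r|) (Gq t x V) (nq V) (x 0*V 2 - x 1*V 1)
          (x 2*V 2 - x 1*V 3) (t*V 0 + x 0*V 1 + x 1*V 2 + x 2*V 3) (V 0) (c*t - r)
          (x 0) (x 2) (x 1) hc hr hE (abs_le_nq V 0) (le_refl _) (hxb 0) (hxb 2) (hxb 1)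
        exact div_step c r (|c*t - r|) (Gq t x V) (nq V) hc hrpos _
          ((habs _ _ e) ▸ tb)
      · -- a = 3
        show |Zv N V 3| ≤ (Gq t x V + |c*t - r|/c * nq V) * r⁻¹
        have e : Zv N V 3 * (c*r^2) = c*(x 0)*(x 0*V 3 - x 2*V 1) + c*(x 1)*(x 1*V 3 - x 2*V 2)
            + (x 2)*(c*(t*V 0 + x 0*V 1 + x 1*V 2 + x 2*V 3) - (c*t-r)*V 0) := by
          rw [Zv_apply, hN3]
          have hcne := hc.ne'
          have hrne := hrpos.ne'
          field_simp
          linear_combination (-(V 3*c)) * hr2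
        have hE : |x 0*V 3 - x 2*V 1| + |x 1*V 3 - x 2*V 2|
            + |t*V 0 + x 0*V 1 + x 1*V 2 + x 2*V 3| ≤ Gq t x V := by
          unfold Gq
          have a1 := abs_nonneg (V 0); have a2 := abs_nonneg (V 1)
          have a3 := abs_nonneg (V 2); have a4 := abs_nonneg (V 3)
          have a5 := abs_nonneg (x 0 * V 2 - x 1 * V 1)
          linarith only [a1, a2, a3, a4, a5]
        have tb := tri_bound c r (|c*t - r|) (Gq t x V) (nq V) (x 0*V 3 - x 2*V 1)
          (x 1*V 3 - x 2*V 2) (t*V 0 + x 0*V 1 + x 1*V 2 + x 2*V 3) (V 0) (c*t - r)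
          (x 0) (x 1) (x 2) hc hr hE (abs_le_nq V 0) (le_refl _) (hxb 0) (hxb 1) (hxb 2)
        exact div_step c r (|c*t - r|) (Gq t x V) (nq V) hc hrpos _
          ((habs _ _ e) ▸ tb)
    -- crude bound on the tangential part
    have hWb' : ∀ b, |Zv N Y b| ≤ (2+1/c) * nq Y := by
      intro b
      have h13 : |Zv N Y b| ≤ |Y b| + |Y 0| * |N b| := by
        rw [Zv_apply, sub_eq_add_neg]
        refine (abs_add_le _ _).trans ?_
        rw [abs_neg, abs_mul]
      have h14 : |Y 0| * |N b| ≤ nq Y * (1+1/c) :=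
        mul_le_mul (abs_le_nq Y 0) (hNb b) (abs_nonneg _) hnY
      have h15 := abs_le_nq Y b
      linarith only [h13, h14, h15]
    clear_value N
    clear hNdef hN0 hN1 hN2 hN3
    -- the splitting identity
    have hsplit : (∑ a, ∑ b, B a b * X a * Y b)
        = X 0 * (∑ a, ∑ b, B a b * N a * Zv N Y b)
          + Y 0 * (∑ a, ∑ b, B a b * Zv N X a * N b)
          + (∑ a, ∑ b, B a b * Zv N X a * Zv N Y b)
          + (X 0 * Y 0) * (∑ a, ∑ b, B a b * N a * N b) := by
      simp only [Fin.sum_univ_four, Zv_apply]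
      ring
    set ZB : ℝ := (Gq t x X + |c*t - r|/c * nq X) * r⁻¹ with hZBdef
    set WB : ℝ := (Gq t x Y + |c*t - r|/c * nq Y) * r⁻¹ with hWBdef
    have hZB0 : 0 ≤ ZB := by
      rw [hZBdef]
      have : (0:ℝ) ≤ |c*t - r|/c * nq X := by positivity
      positivity
    have hWB0 : 0 ≤ WB := by
      rw [hWBdef]
      have : (0:ℝ) ≤ |c*t - r|/c * nq Y := by positivity
      positivity
    have hS1 : |∑ a, ∑ b, B a b * N a * Zv N Y b| ≤ M * ((2+1/c) * WB) := by
      rw [hMdef]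
      exact sum4_bound B N (Zv N Y) _ _ hNb2 (fun b => le_of_le_of_eq (hZv Y b) hWBdef.symm)
    have hS2 : |∑ a, ∑ b, B a b * Zv N X a * N b| ≤ M * (ZB * (2+1/c)) := by
      rw [hMdef]
      exact sum4_bound B (Zv N X) N _ _ (fun a => le_of_le_of_eq (hZv X a) hZBdef.symm) hNb2
    have hS3 : |∑ a, ∑ b, B a b * Zv N X a * Zv N Y b| ≤ M * (ZB * ((2+1/c) * nq Y)) := by
      rw [hMdef]
      exact sum4_bound B (Zv N X) (Zv N Y) _ _
        (fun a => le_of_le_of_eq (hZv X a) hZBdef.symm) hWb'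
    have step1 : |∑ a, ∑ b, B a b * X a * Y b|
        ≤ M * (2+1/c) * (nq X * WB + 2 * (ZB * nq Y)) := by
      rw [hsplit, hNnull, mul_zero, add_zero]
      have q1 : |X 0 * (∑ a, ∑ b, B a b * N a * Zv N Y b)| ≤ nq X * (M * ((2+1/c) * WB)) := by
        rw [abs_mul]
        exact mul_le_mul (abs_le_nq X 0) hS1 (abs_nonneg _) hnX
      have q2 : |Y 0 * (∑ a, ∑ b, B a b * Zv N X a * N b)| ≤ nq Y * (M * (ZB * (2+1/c))) := by
        rw [abs_mul]
        exact mul_le_mul (abs_le_nq Y 0) hS2 (abs_nonneg _) hnY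
      calc |X 0 * (∑ a, ∑ b, B a b * N a * Zv N Y b)
              + Y 0 * (∑ a, ∑ b, B a b * Zv N X a * N b)
              + (∑ a, ∑ b, B a b * Zv N X a * Zv N Y b)|
          ≤ |X 0 * (∑ a, ∑ b, B a b * N a * Zv N Y b)|
              + |Y 0 * (∑ a, ∑ b, B a b * Zv N X a * N b)|
              + |∑ a, ∑ b, B a b * Zv N X a * Zv N Y b| := abs_add_three' _ _ _
        _ ≤ nq X * (M * ((2+1/c) * WB)) + nq Y * (M * (ZB * (2+1/c)))
              + M * (ZB * ((2+1/c) * nq Y)) := by linarith only [q1, q2, hS3]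
        _ = M * (2+1/c) * (nq X * WB + 2 * (ZB * nq Y)) := by ring
    have step2 : nq X * WB + 2 * (ZB * nq Y)
        ≤ (nq X * Gq t x Y + 2 * (Gq t x X * nq Y)) * (2 * (jb r)⁻¹)
          + (3/c) * ((2+κ) * (jb (c*t-r) / jb (t+r))) * (nq X * nq Y) := by
      rw [hZBdef, hWBdef]
      have expand : nq X * ((Gq t x Y + |c*t - r|/c * nq Y) * r⁻¹)
            + 2 * (((Gq t x X + |c*t - r|/c * nq X) * r⁻¹) * nq Y)
          = (nq X * Gq t x Y + 2 * (Gq t x X * nq Y)) * r⁻¹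
            + (3/c) * (|c*t - r| * r⁻¹) * (nq X * nq Y) := by ring
      rw [expand]
      have q3 : (nq X * Gq t x Y + 2 * (Gq t x X * nq Y)) * r⁻¹
          ≤ (nq X * Gq t x Y + 2 * (Gq t x X * nq Y)) * (2 * (jb r)⁻¹) := by
        apply mul_le_mul_of_nonneg_left hrinv1
        linarith only [mul_nonneg hnX hGY, mul_nonneg hGX hnY]
      have q4 : (3/c) * (|c*t - r| * r⁻¹) * (nq X * nq Y)
          ≤ (3/c) * ((2+κ) * (jb (c*t-r) / jb (t+r))) * (nq X * nq Y) := by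
        apply mul_le_mul_of_nonneg_right _ (mul_nonneg hnX hnY)
        exact mul_le_mul_of_nonneg_left hrinv2 (by positivity)
      linarith only [q3, q4]
    have hMc2 : (0:ℝ) ≤ M * (2+1/c) := mul_nonneg hM0 h1c.le
    have step12 : |∑ a, ∑ b, B a b * X a * Y b|
        ≤ M * (2+1/c) * ((nq X * Gq t x Y + 2 * (Gq t x X * nq Y)) * (2 * (jb r)⁻¹)
          + (3/c) * ((2+κ) * (jb (c*t-r) / jb (t+r))) * (nq X * nq Y)) :=
      le_trans step1 (mul_le_mul_of_nonneg_left step2 hMc2)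
    have hC4' : 2*(M*(2+1/c)) ≤ C' := by linarith only [hC4, mul_nonneg hM0 h1c.le]
    have h01 : 0 ≤ (C' - 4*(M*(2+1/c))) * ((jb r)⁻¹ * (Gq t x X * nq Y)) := by
      apply mul_nonneg (by linarith only [hC4])
      exact mul_nonneg (inv_nonneg.2 hjr.le) (mul_nonneg hGX hnY)
    have h02 : 0 ≤ (C' - 2*(M*(2+1/c))) * ((jb r)⁻¹ * (nq X * Gq t x Y)) := by
      apply mul_nonneg (by linarith only [hC4'])
      exact mul_nonneg (inv_nonneg.2 hjr.le) (mul_nonneg hnX hGY)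
    have h03 : 0 ≤ (C' - (3*(2+κ)/c)*(M*(2+1/c)))
        * ((jb (c*t-r) / jb (t+r)) * (nq X * nq Y)) := by
      apply mul_nonneg (by linarith only [hC5])
      exact mul_nonneg (div_nonneg hjq.le hjs.le) (mul_nonneg hnX hnY)
    have hid : C' * (jb r)⁻¹ * (Gq t x X * nq Y + nq X * Gq t x Y)
          + C' * (jb (c*t - r) / jb (t + r)) * nq X * nq Y
        - (M * (2+1/c) * ((nq X * Gq t x Y + 2 * (Gq t x X * nq Y)) * (2 * (jb r)⁻¹)
          + (3/c) * ((2+κ) * (jb (c*t-r) / jb (t+r))) * (nq X * nq Y)))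
        = (C' - 4*(M*(2+1/c))) * ((jb r)⁻¹ * (Gq t x X * nq Y))
          + (C' - 2*(M*(2+1/c))) * ((jb r)⁻¹ * (nq X * Gq t x Y))
          + (C' - (3*(2+κ)/c)*(M*(2+1/c)))
            * ((jb (c*t-r) / jb (t+r)) * (nq X * nq Y)) := by ring
    linarith only [step12, h01, h02, h03, hid]


lemma gradNorm_eq (u : Pt → ℝ) (X : Pt) : gradNorm u X = nq (fun a => pd a u X) := by
  rw [gradNorm, nq, Fin.sum_univ_four]

lemma gam_sum_eq (t : ℝ) (x : Sp) (u : Pt → ℝ) :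
    (∑ i : Fin 8, |Gam i u (Fin.cons t x)|) = Gq t x (fun a => pd a u (Fin.cons t x)) := by
  have e0 : (Fin.cons t x : Pt) 0 = t := by rw [Fin.cons_zero]
  have e1 : (Fin.cons t x : Pt) 1 = x 0 := by
    rw [show (1 : Fin 4) = Fin.succ 0 from rfl, Fin.cons_succ]
  have e2 : (Fin.cons t x : Pt) 2 = x 1 := by
    rw [show (2 : Fin 4) = Fin.succ 1 from rfl, Fin.cons_succ]
  have e3 : (Fin.cons t x : Pt) 3 = x 2 := by
    rw [show (3 : Fin 4) = Fin.succ 2 from rfl, Fin.cons_succ]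
  have g0 : Gam 0 = pd 0 := rfl
  have g1 : Gam 1 = pd 1 := rfl
  have g2 : Gam 2 = pd 2 := rfl
  have g3 : Gam 3 = pd 3 := rfl
  have g4 : Gam 4 = rot 1 2 := rfl
  have g5 : Gam 5 = rot 1 3 := rfl
  have g6 : Gam 6 = rot 2 3 := rfl
  have g7 : Gam 7 = scal := rfl
  rw [Fin.sum_univ_eight, g0, g1, g2, g3, g4, g5, g6, g7, Gq]
  simp only [rot, scal, Fin.sum_univ_four, e0, e1, e2, e3]

/-- semilinear null form bound, (3.2) of the paper.  If the constants
`B_{ab}` satisfy the null condition for speed `c`, then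
`|B_{ab}∂_a u ∂_b v| ≤ C'⟨r⟩⁻¹(|Γu||∂v| + |∂u||Γv|) + C'(⟨ct-r⟩/⟨t+r⟩)|∂u||∂v|`. -/
theorem stmt_7 (c : ℝ) (hc : 0 < c) (B : Fin 4 → Fin 4 → ℝ)
    (hnull : ∀ ξ : Fin 4 → ℝ,
      (ξ 0) ^ 2 / c ^ 2 - (ξ 1) ^ 2 - (ξ 2) ^ 2 - (ξ 3) ^ 2 = 0 →
      ∑ a, ∑ b, B a b * ξ a * ξ b = 0) :
    ∃ C' : ℝ, 0 < C' ∧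
      ∀ (u v : Pt → ℝ), ContDiff ℝ (⊤ : ℕ∞) u → ContDiff ℝ (⊤ : ℕ∞) v →
        ∀ (t : ℝ), 0 ≤ t → ∀ x : Sp,
          |∑ a, ∑ b, B a b * pd a u (Fin.cons t x) * pd b v (Fin.cons t x)|
            ≤ C' * (jb (rad x))⁻¹ *
                ((∑ i : Fin 8, |Gam i u (Fin.cons t x)|) * gradNorm v (Fin.cons t x)
                  + gradNorm u (Fin.cons t x) * ∑ i : Fin 8, |Gam i v (Fin.cons t x)|)
              + C' * (jb (c * t - rad x) / jb (t + rad x)) *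
                  gradNorm u (Fin.cons t x) * gradNorm v (Fin.cons t x) := by
  obtain ⟨C', hC0, hkey⟩ := key c hc B hnull
  refine ⟨C', hC0, ?_⟩
  intro u v _ _ t ht x
  have hr2 : x 0 ^ 2 + x 1 ^ 2 + x 2 ^ 2 = (rad x) ^ 2 := by
    rw [rad, Real.sq_sqrt (by positivity), Fin.sum_univ_three]
  have h := hkey t (rad x) x (fun a => pd a u (Fin.cons t x))
    (fun a => pd a v (Fin.cons t x)) ht (Real.sqrt_nonneg _) hr2
  rw [gam_sum_eq t x u, gam_sum_eq t x v, gradNorm_eq u (Fin.cons t x),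
    gradNorm_eq v (Fin.cons t x)]
  exact h
end
end

section
/- There is a uniform constant C such that for every smooth scalar function h on ℝ×ℝ³ and every (t,x) with t ≥ 0: ⟨t−r⟩·( Σ_{0≤a≤3} |∂_a ∂_t h(t,x)| + |Δh(t,x)| ) ≤ C Σ_{|α|≤1} Σ_{0≤a≤3} |∂_a Γ^α h(t,x)| + C⟨t+r⟩ |□h(t,x)|. -/
open MeasureTheory Real Finset

noncomputable section

set_option maxHeartbeats 2000000


lemma contDiff_pd {h : Pt → ℝ} (hh : ContDiff ℝ (⊤ : ℕ∞) h) (a : Fin 4) : ContDiff ℝ (⊤ : ℕ∞) (pd a h) := by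
  have h1 : ContDiff ℝ (⊤ : ℕ∞) (fderiv ℝ h) := hh.fderiv_right (by simp)
  exact h1.clm_apply contDiff_const

lemma hasFDerivAt_coord_mul {g : Pt → ℝ} {X : Pt} (hg : DifferentiableAt ℝ g X) (i : Fin 4) :
    HasFDerivAt (fun Y : Pt => Y i * g Y)
      ((X i) • (fderiv ℝ g X) + (g X) • (ContinuousLinearMap.proj i)) X :=
  ((ContinuousLinearMap.proj i).hasFDerivAt (x := X)).mul hg.hasFDerivAt

lemma pd_rot {h : Pt → ℝ} (hh : ContDiff ℝ (⊤ : ℕ∞) h) (p q a : Fin 4) (X : Pt) :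
    pd a (rot p q h) X =
      ((if p = a then pd q h X else 0) + X p * pd a (pd q h) X)
      - ((if q = a then pd p h X else 0) + X q * pd a (pd p h) X) := by
  have hp := ((contDiff_pd hh p).differentiable (by simp) X).hasFDerivAt
  have hq := ((contDiff_pd hh q).differentiable (by simp) X).hasFDerivAt
  have H : HasFDerivAt (rot p q h)
      (((X p) • (fderiv ℝ (pd q h) X) + (pd q h X) • (ContinuousLinearMap.proj p))
        - ((X q) • (fderiv ℝ (pd p h) X) + (pd p h X) • (ContinuousLinearMap.proj q))) X :=
    (hasFDerivAt_coord_mul hq.differentiableAt p).sub (hasFDerivAt_coord_mul hp.differentiableAt q)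
  have e : pd a (rot p q h) X = fderiv ℝ (rot p q h) X (Pi.single a 1) := rfl
  rw [e, H.fderiv]
  by_cases h1 : p = a <;> by_cases h2 : q = a <;>
    simp [pd, Pi.single_apply, h1, h2] <;> ring

lemma pd_scal {h : Pt → ℝ} (hh : ContDiff ℝ (⊤ : ℕ∞) h) (a : Fin 4) (X : Pt) :
    pd a (scal h) X = pd a h X + ∑ b, X b * pd a (pd b h) X := by
  have H : HasFDerivAt (scal h)
      (∑ b, ((X b) • (fderiv ℝ (pd b h) X) + (pd b h X) • (ContinuousLinearMap.proj b))) X := by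
    apply HasFDerivAt.fun_sum
    intro b _
    exact hasFDerivAt_coord_mul ((contDiff_pd hh b).differentiable (by simp) X) b
  have e : pd a (scal h) X = fderiv ℝ (scal h) X (Pi.single a 1) := rfl
  rw [e, H.fderiv]
  simp [pd, Pi.single_apply, Finset.sum_add_distrib, Finset.sum_ite_eq]
  ring
lemma pd_symm {h : Pt → ℝ} (hh : ContDiff ℝ (⊤ : ℕ∞) h) (a b : Fin 4) (X : Pt) :
    pd a (pd b h) X = pd b (pd a h) X := by
  have hsymm : IsSymmSndFDerivAt ℝ h X := hh.contDiffAt.isSymmSndFDerivAt (by rw [minSmoothness_of_isRCLikeNormedField]; exact WithTop.coe_le_coe.mpr (le_top : (2 : ℕ∞) ≤ ⊤))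
  have hdf : DifferentiableAt ℝ (fderiv ℝ h) X :=
    ((hh.fderiv_right (by simp) : ContDiff ℝ (⊤ : ℕ∞) (fderiv ℝ h)).differentiable (by simp)).differentiableAt
  have key : ∀ v w : Pt, fderiv ℝ (fun Y => fderiv ℝ h Y v) X w
      = fderiv ℝ (fderiv ℝ h) X w v := by
    intro v w
    rw [fderiv_clm_apply hdf (differentiableAt_const v)]
    simp
  have e1 : pd a (pd b h) X
      = fderiv ℝ (fun Y => fderiv ℝ h Y (Pi.single b 1)) X (Pi.single a 1) := rfl
  have e2 : pd b (pd a h) X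
      = fderiv ℝ (fun Y => fderiv ℝ h Y (Pi.single a 1)) X (Pi.single b 1) := rfl
  rw [e1, e2, key, key, hsymm]

lemma one_le_jb (z : ℝ) : 1 ≤ jb z := by
  rw [jb, Real.one_le_sqrt]; nlinarith [sq_nonneg z]

lemma mbound {x r g E : ℝ} (hx : |x| ≤ r) (hg : |g| ≤ E) : |x * g| ≤ r * E := by
  rw [abs_mul]; exact mul_le_mul hx hg (abs_nonneg _) ((abs_nonneg x).trans hx)
section Key
variable {t r x0 x1 x2 P p1 p2 p3 d11 d22 d33 a12 a13 a23 E : ℝ}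

lemma stepP (ht : 0 ≤ t) (hr : 0 ≤ r) (hx : x0^2 + x1^2 + x2^2 = r^2) (hE : 0 ≤ E)
    (htr : 0 < t + r)
    (hx0 : |x0| ≤ r) (hx1 : |x1| ≤ r) (hx2' : |x2| ≤ r)
    (hS0 : |t*P + (x0*p1 + x1*p2 + x2*p3)| ≤ E)
    (hS1 : |t*p1 + (x0*d11 + x1*a12 + x2*a13)| ≤ E)
    (hS2 : |t*p2 + (x0*a12 + x1*d22 + x2*a23)| ≤ E)
    (hS3 : |t*p3 + (x0*a13 + x1*a23 + x2*d33)| ≤ E)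
    (hw1a : |x0*a12 - x1*d11| ≤ E) (hw1b : |x0*a13 - x2*d11| ≤ E)
    (hw2a : |x0*d22 - x1*a12| ≤ E) (hw2c : |x1*a23 - x2*d22| ≤ E)
    (hw3b : |x0*d33 - x2*a13| ≤ E) (hw3c : |x1*d33 - x2*a23| ≤ E) :
    |t - r| * |P| ≤ 10*E + r*|P - (d11 + d22 + d33)| := by
  have hB0 : (0:ℝ) ≤ |P - (d11 + d22 + d33)| := abs_nonneg _
  have ht0 : |t * (t*P + (x0*p1 + x1*p2 + x2*p3))| ≤ t*E := by
    rw [abs_mul, abs_of_nonneg ht]; exact mul_le_mul_of_nonneg_left hS0 ht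
  obtain ⟨f1, f2⟩ := abs_le.mp ht0
  obtain ⟨e1l, e1r⟩ := abs_le.mp (mbound hx0 hS1)
  obtain ⟨e2l, e2r⟩ := abs_le.mp (mbound hx1 hS2)
  obtain ⟨e3l, e3r⟩ := abs_le.mp (mbound hx2' hS3)
  obtain ⟨v1l, v1r⟩ := abs_le.mp (mbound hx1 hw1a)
  obtain ⟨v2l, v2r⟩ := abs_le.mp (mbound hx2' hw1b)
  obtain ⟨v3l, v3r⟩ := abs_le.mp (mbound hx0 hw2a)
  obtain ⟨v4l, v4r⟩ := abs_le.mp (mbound hx2' hw2c)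
  obtain ⟨v5l, v5r⟩ := abs_le.mp (mbound hx0 hw3b)
  obtain ⟨v6l, v6r⟩ := abs_le.mp (mbound hx1 hw3c)
  have g2 : r^2*(P - (d11 + d22 + d33)) ≤ r^2*|P - (d11 + d22 + d33)| :=
    mul_le_mul_of_nonneg_left (le_abs_self _) (sq_nonneg r)
  have g1 : -(r^2*|P - (d11 + d22 + d33)|) ≤ r^2*(P - (d11 + d22 + d33)) := by
    have := mul_le_mul_of_nonneg_left (neg_abs_le (P - (d11 + d22 + d33))) (sq_nonneg r)
    linarith
  have hxD : (x0^2 + x1^2 + x2^2)*(d11 + d22 + d33) = r^2*(d11 + d22 + d33) := by rw [hx]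
  have h1 : |(t-r) * ((t+r) * P)| ≤ t*E + 9*(r*E) + r^2*|P - (d11 + d22 + d33)| := by
    rw [abs_le]; constructor <;> linarith [hxD]
  have h2 : |(t-r) * ((t+r) * P)| = (|t - r| * |P|) * (t + r) := by
    rw [abs_mul, abs_mul, abs_of_pos htr]; ring
  rw [h2] at h1
  have h3 : t*E + 9*(r*E) + r^2*|P - (d11 + d22 + d33)|
      ≤ (10*E + r*|P - (d11 + d22 + d33)|) * (t+r) := by
    nlinarith [mul_nonneg ht hE, mul_nonneg hr hE, mul_nonneg (mul_nonneg ht hr) hB0,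
      mul_nonneg (mul_nonneg hr hr) hB0]
  exact le_of_mul_le_mul_right (h1.trans h3) htr

lemma stepQx (ht : 0 ≤ t) (hr : 0 ≤ r) (hx : x0^2 + x1^2 + x2^2 = r^2) (hE : 0 ≤ E)
    (htr : 0 < t + r)
    (hx0 : |x0| ≤ r) (hx1 : |x1| ≤ r) (hx2' : |x2| ≤ r)
    (hS0 : |t*P + (x0*p1 + x1*p2 + x2*p3)| ≤ E)
    (hS1 : |t*p1 + (x0*d11 + x1*a12 + x2*a13)| ≤ E)
    (hS2 : |t*p2 + (x0*a12 + x1*d22 + x2*a23)| ≤ E)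
    (hS3 : |t*p3 + (x0*a13 + x1*a23 + x2*d33)| ≤ E)
    (hw1a : |x0*a12 - x1*d11| ≤ E) (hw1b : |x0*a13 - x2*d11| ≤ E)
    (hw2a : |x0*d22 - x1*a12| ≤ E) (hw2c : |x1*a23 - x2*d22| ≤ E)
    (hw3b : |x0*d33 - x2*a13| ≤ E) (hw3c : |x1*d33 - x2*a23| ≤ E) :
    |t - r| * |x0*p1 + x1*p2 + x2*p3| ≤ 10*(r*E) + r^2*|P - (d11 + d22 + d33)| := by
  have hB0 : (0:ℝ) ≤ |P - (d11 + d22 + d33)| := abs_nonneg _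
  have tb : ∀ y : ℝ, |y| ≤ r*E → |t * y| ≤ t*(r*E) := by
    intro y hy; rw [abs_mul, abs_of_nonneg ht]; exact mul_le_mul_of_nonneg_left hy ht
  obtain ⟨e1l, e1r⟩ := abs_le.mp (tb _ (mbound hx0 hS1))
  obtain ⟨e2l, e2r⟩ := abs_le.mp (tb _ (mbound hx1 hS2))
  obtain ⟨e3l, e3r⟩ := abs_le.mp (tb _ (mbound hx2' hS3))
  obtain ⟨v1l, v1r⟩ := abs_le.mp (tb _ (mbound hx1 hw1a))
  obtain ⟨v2l, v2r⟩ := abs_le.mp (tb _ (mbound hx2' hw1b))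
  obtain ⟨v3l, v3r⟩ := abs_le.mp (tb _ (mbound hx0 hw2a))
  obtain ⟨v4l, v4r⟩ := abs_le.mp (tb _ (mbound hx2' hw2c))
  obtain ⟨v5l, v5r⟩ := abs_le.mp (tb _ (mbound hx0 hw3b))
  obtain ⟨v6l, v6r⟩ := abs_le.mp (tb _ (mbound hx1 hw3c))
  have hrS0 : |r^2 * (t*P + (x0*p1 + x1*p2 + x2*p3))| ≤ r^2*E := by
    rw [abs_mul, abs_of_nonneg (sq_nonneg r)]
    exact mul_le_mul_of_nonneg_left hS0 (sq_nonneg r)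
  obtain ⟨f1, f2⟩ := abs_le.mp hrS0
  have g2 : t*(r^2*(P - (d11 + d22 + d33))) ≤ t*(r^2*|P - (d11 + d22 + d33)|) := by
    have := mul_le_mul_of_nonneg_left (le_abs_self (P - (d11 + d22 + d33))) (sq_nonneg r)
    exact mul_le_mul_of_nonneg_left this ht
  have g1 : -(t*(r^2*|P - (d11 + d22 + d33)|)) ≤ t*(r^2*(P - (d11 + d22 + d33))) := by
    have h' := mul_le_mul_of_nonneg_left (neg_abs_le (P - (d11 + d22 + d33))) (sq_nonneg r)
    have := mul_le_mul_of_nonneg_left h' ht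
    linarith
  have hxD : (x0^2 + x1^2 + x2^2)*(t*(d11 + d22 + d33)) = r^2*(t*(d11 + d22 + d33)) := by
    rw [hx]
  have h1 : |(t-r) * ((t+r) * (x0*p1 + x1*p2 + x2*p3))|
      ≤ 9*(t*(r*E)) + r^2*E + t*(r^2*|P - (d11 + d22 + d33)|) := by
    rw [abs_le]; constructor <;> linarith [hxD]
  have h2 : |(t-r) * ((t+r) * (x0*p1 + x1*p2 + x2*p3))|
      = (|t - r| * |x0*p1 + x1*p2 + x2*p3|) * (t + r) := by
    rw [abs_mul, abs_mul, abs_of_pos htr]; ring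
  rw [h2] at h1
  have h3 : 9*(t*(r*E)) + r^2*E + t*(r^2*|P - (d11 + d22 + d33)|)
      ≤ (10*(r*E) + r^2*|P - (d11 + d22 + d33)|) * (t+r) := by
    nlinarith [mul_nonneg (mul_nonneg ht hr) hE, mul_nonneg (mul_nonneg hr hr) hE,
      mul_nonneg (mul_nonneg (mul_nonneg hr hr) hr) hB0]
  exact le_of_mul_le_mul_right (h1.trans h3) htr
end Key
section Key2
variable {t r x0 x1 x2 P p1 p2 p3 d11 d22 d33 a12 a13 a23 E : ℝ}

-- tangential step: |t-r| * |x0*p2 - x1*p1| ≤ 6 r E  (and the two analogues)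
lemma stepWa (ht : 0 ≤ t) (hr : 0 ≤ r) (hE : 0 ≤ E)
    (hx0 : |x0| ≤ r) (hx1 : |x1| ≤ r) (hx2' : |x2| ≤ r)
    (hS1 : |t*p1 + (x0*d11 + x1*a12 + x2*a13)| ≤ E)
    (hS2 : |t*p2 + (x0*a12 + x1*d22 + x2*a23)| ≤ E)
    (hw0a : |x0*p2 - x1*p1| ≤ E)
    (hw1a : |x0*a12 - x1*d11| ≤ E) (hw2a : |x0*d22 - x1*a12| ≤ E)
    (hw3a : |x0*a23 - x1*a13| ≤ E) :
    |t - r| * |x0*p2 - x1*p1| ≤ 6*(r*E) := by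
  obtain ⟨e1l, e1r⟩ := abs_le.mp (mbound hx0 hS2)
  obtain ⟨e2l, e2r⟩ := abs_le.mp (mbound hx1 hS1)
  obtain ⟨v1l, v1r⟩ := abs_le.mp (mbound hx0 hw1a)
  obtain ⟨v2l, v2r⟩ := abs_le.mp (mbound hx1 hw2a)
  obtain ⟨v3l, v3r⟩ := abs_le.mp (mbound hx2' hw3a)
  have h1 : |t * (x0*p2 - x1*p1)| ≤ 5*(r*E) := by
    rw [abs_le]; constructor <;> linarith
  rw [abs_mul, abs_of_nonneg ht] at h1
  have habstr : |t - r| ≤ t + r := by rw [abs_le]; constructor <;> linarith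
  have h2 : |t - r| * |x0*p2 - x1*p1| ≤ (t + r) * |x0*p2 - x1*p1| :=
    mul_le_mul_of_nonneg_right habstr (abs_nonneg _)
  have h3 : r * |x0*p2 - x1*p1| ≤ r*E := mul_le_mul_of_nonneg_left hw0a hr
  nlinarith [h2, h3, h1]

lemma stepWb (ht : 0 ≤ t) (hr : 0 ≤ r) (hE : 0 ≤ E)
    (hx0 : |x0| ≤ r) (hx1 : |x1| ≤ r) (hx2' : |x2| ≤ r)
    (hS1 : |t*p1 + (x0*d11 + x1*a12 + x2*a13)| ≤ E)
    (hS3 : |t*p3 + (x0*a13 + x1*a23 + x2*d33)| ≤ E)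
    (hw0b : |x0*p3 - x2*p1| ≤ E)
    (hw1b : |x0*a13 - x2*d11| ≤ E) (hw2b : |x0*a23 - x2*a12| ≤ E)
    (hw3b : |x0*d33 - x2*a13| ≤ E) :
    |t - r| * |x0*p3 - x2*p1| ≤ 6*(r*E) := by
  obtain ⟨e1l, e1r⟩ := abs_le.mp (mbound hx0 hS3)
  obtain ⟨e2l, e2r⟩ := abs_le.mp (mbound hx2' hS1)
  obtain ⟨v1l, v1r⟩ := abs_le.mp (mbound hx0 hw1b)
  obtain ⟨v2l, v2r⟩ := abs_le.mp (mbound hx1 hw2b)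
  obtain ⟨v3l, v3r⟩ := abs_le.mp (mbound hx2' hw3b)
  have h1 : |t * (x0*p3 - x2*p1)| ≤ 5*(r*E) := by
    rw [abs_le]; constructor <;> linarith
  rw [abs_mul, abs_of_nonneg ht] at h1
  have habstr : |t - r| ≤ t + r := by rw [abs_le]; constructor <;> linarith
  have h2 : |t - r| * |x0*p3 - x2*p1| ≤ (t + r) * |x0*p3 - x2*p1| :=
    mul_le_mul_of_nonneg_right habstr (abs_nonneg _)
  have h3 : r * |x0*p3 - x2*p1| ≤ r*E := mul_le_mul_of_nonneg_left hw0b hr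
  nlinarith [h2, h3, h1]

lemma stepWc (ht : 0 ≤ t) (hr : 0 ≤ r) (hE : 0 ≤ E)
    (hx0 : |x0| ≤ r) (hx1 : |x1| ≤ r) (hx2' : |x2| ≤ r)
    (hS2 : |t*p2 + (x0*a12 + x1*d22 + x2*a23)| ≤ E)
    (hS3 : |t*p3 + (x0*a13 + x1*a23 + x2*d33)| ≤ E)
    (hw0c : |x1*p3 - x2*p2| ≤ E)
    (hw1c : |x1*a13 - x2*a12| ≤ E) (hw2c : |x1*a23 - x2*d22| ≤ E)
    (hw3c : |x1*d33 - x2*a23| ≤ E) :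
    |t - r| * |x1*p3 - x2*p2| ≤ 6*(r*E) := by
  obtain ⟨e1l, e1r⟩ := abs_le.mp (mbound hx1 hS3)
  obtain ⟨e2l, e2r⟩ := abs_le.mp (mbound hx2' hS2)
  obtain ⟨v1l, v1r⟩ := abs_le.mp (mbound hx0 hw1c)
  obtain ⟨v2l, v2r⟩ := abs_le.mp (mbound hx1 hw2c)
  obtain ⟨v3l, v3r⟩ := abs_le.mp (mbound hx2' hw3c)
  have h1 : |t * (x1*p3 - x2*p2)| ≤ 5*(r*E) := by
    rw [abs_le]; constructor <;> linarith
  rw [abs_mul, abs_of_nonneg ht] at h1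
  have habstr : |t - r| ≤ t + r := by rw [abs_le]; constructor <;> linarith
  have h2 : |t - r| * |x1*p3 - x2*p2| ≤ (t + r) * |x1*p3 - x2*p2| :=
    mul_le_mul_of_nonneg_right habstr (abs_nonneg _)
  have h3 : r * |x1*p3 - x2*p2| ≤ r*E := mul_le_mul_of_nonneg_left hw0c hr
  nlinarith [h2, h3, h1]
end Key2
section Key3
variable {t r E BB : ℝ}

-- generic mixed-component step, given the Qx and two tangential bounds
lemma stepMgen (hr : 0 < r) {pj q wa wb c0 ca cb : ℝ}
    (hid : r^2 * pj = c0 * q + ca * wa + cb * wb)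
    (hc0 : |c0| ≤ r) (hca : |ca| ≤ r) (hcb : |cb| ≤ r)
    (hQ : |t - r| * |q| ≤ 10*(r*E) + r^2*BB)
    (hWa : |t - r| * |wa| ≤ 6*(r*E))
    (hWb : |t - r| * |wb| ≤ 6*(r*E)) :
    |t - r| * |pj| ≤ 22*E + r*BB := by
  have hr2 : (0:ℝ) < r^2 := by positivity
  have h1 : |t - r| * (r^2 * |pj|) = |t - r| * |r^2 * pj| := by
    rw [abs_mul, abs_of_nonneg (le_of_lt hr2)]
  have h2 : |t - r| * |r^2 * pj|
      ≤ r * (|t - r| * |q|) + r * (|t - r| * |wa|) + r * (|t - r| * |wb|) := by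
    rw [hid]
    have tri : |c0 * q + ca * wa + cb * wb| ≤ |c0| * |q| + |ca| * |wa| + |cb| * |wb| := by
      calc |c0 * q + ca * wa + cb * wb|
          ≤ |c0 * q + ca * wa| + |cb * wb| := abs_add_le _ _
        _ ≤ |c0 * q| + |ca * wa| + |cb * wb| := by
            have := abs_add_le (c0 * q) (ca * wa); linarith
        _ = |c0| * |q| + |ca| * |wa| + |cb| * |wb| := by rw [abs_mul, abs_mul, abs_mul]
    have tri2 : |c0| * |q| + |ca| * |wa| + |cb| * |wb| ≤ r * |q| + r * |wa| + r * |wb| := by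
      have b1 := mul_le_mul_of_nonneg_right hc0 (abs_nonneg q)
      have b2 := mul_le_mul_of_nonneg_right hca (abs_nonneg wa)
      have b3 := mul_le_mul_of_nonneg_right hcb (abs_nonneg wb)
      linarith
    calc |t - r| * |c0 * q + ca * wa + cb * wb|
        ≤ |t - r| * (r * |q| + r * |wa| + r * |wb|) :=
          mul_le_mul_of_nonneg_left (tri.trans tri2) (abs_nonneg _)
      _ = r * (|t - r| * |q|) + r * (|t - r| * |wa|) + r * (|t - r| * |wb|) := by ring
  have hrr : (0:ℝ) ≤ r := le_of_lt hr
  have h3 : r * (|t - r| * |q|) + r * (|t - r| * |wa|) + r * (|t - r| * |wb|)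
      ≤ r * (10*(r*E) + r^2*BB) + r * (6*(r*E)) + r * (6*(r*E)) := by
    have b1 := mul_le_mul_of_nonneg_left hQ hrr
    have b2 := mul_le_mul_of_nonneg_left hWa hrr
    have b3 := mul_le_mul_of_nonneg_left hWb hrr
    linarith
  have h4 : (|t - r| * |pj|) * r^2 ≤ (22*E + r*BB) * r^2 := by
    have h5 : |t - r| * (r^2 * |pj|) ≤ r * (10*(r*E) + r^2*BB) + 12*(r*(r*E)) := by
      rw [h1]; linarith [h2.trans h3]
    nlinarith [h5]
  exact le_of_mul_le_mul_right h4 hr2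
end Key3
lemma key_s11 (t r x0 x1 x2 : ℝ) (ht : 0 ≤ t) (hr : 0 ≤ r) (hx : x0^2 + x1^2 + x2^2 = r^2)
    (P p1 p2 p3 d11 d22 d33 a12 a13 a23 E : ℝ) (hE : 0 ≤ E)
    (hP : |P| ≤ E) (hp1 : |p1| ≤ E) (hp2 : |p2| ≤ E) (hp3 : |p3| ≤ E)
    (hd11 : |d11| ≤ E) (hd22 : |d22| ≤ E) (hd33 : |d33| ≤ E)
    (hS0 : |t*P + (x0*p1 + x1*p2 + x2*p3)| ≤ E)
    (hS1 : |t*p1 + (x0*d11 + x1*a12 + x2*a13)| ≤ E)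
    (hS2 : |t*p2 + (x0*a12 + x1*d22 + x2*a23)| ≤ E)
    (hS3 : |t*p3 + (x0*a13 + x1*a23 + x2*d33)| ≤ E)
    (hw0a : |x0*p2 - x1*p1| ≤ E) (hw0b : |x0*p3 - x2*p1| ≤ E) (hw0c : |x1*p3 - x2*p2| ≤ E)
    (hw1a : |x0*a12 - x1*d11| ≤ E) (hw1b : |x0*a13 - x2*d11| ≤ E) (hw1c : |x1*a13 - x2*a12| ≤ E)
    (hw2a : |x0*d22 - x1*a12| ≤ E) (hw2b : |x0*a23 - x2*a12| ≤ E) (hw2c : |x1*a23 - x2*d22| ≤ E)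
    (hw3a : |x0*a23 - x1*a13| ≤ E) (hw3b : |x0*d33 - x2*a13| ≤ E) (hw3c : |x1*d33 - x2*a23| ≤ E) :
    jb (t - r) * ((|P| + |p1| + |p2| + |p3|) + |d11 + d22 + d33|)
      ≤ 200*E + 200 * jb (t+r) * |P - (d11 + d22 + d33)| := by
  have hJ1 : 1 ≤ jb (t+r) := one_le_jb _
  have hJtr : t + r ≤ jb (t+r) := le_trans (le_abs_self _) (abs_le_jb _)
  have hB0 : (0:ℝ) ≤ |P - (d11 + d22 + d33)| := abs_nonneg _
  have hJB : (0:ℝ) ≤ jb (t+r) * |P - (d11 + d22 + d33)| := mul_nonneg (by linarith) hB0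
  have hx0 : |x0| ≤ r := by
    rw [← Real.sqrt_sq_eq_abs, ← Real.sqrt_sq hr]
    exact Real.sqrt_le_sqrt (by nlinarith [sq_nonneg x1, sq_nonneg x2])
  have hx1 : |x1| ≤ r := by
    rw [← Real.sqrt_sq_eq_abs, ← Real.sqrt_sq hr]
    exact Real.sqrt_le_sqrt (by nlinarith [sq_nonneg x0, sq_nonneg x2])
  have hx2' : |x2| ≤ r := by
    rw [← Real.sqrt_sq_eq_abs, ← Real.sqrt_sq hr]
    exact Real.sqrt_le_sqrt (by nlinarith [sq_nonneg x0, sq_nonneg x1])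
  have hL7 : (|P| + |p1| + |p2| + |p3|) + |d11 + d22 + d33| ≤ 7*E := by
    have h1 := abs_add_le (d11 + d22) d33
    have h2 := abs_add_le d11 d22
    linarith
  have hL0 : (0:ℝ) ≤ (|P| + |p1| + |p2| + |p3|) + |d11 + d22 + d33| := by positivity
  have hmain : |t - r| * ((|P| + |p1| + |p2| + |p3|) + |d11 + d22 + d33|)
      ≤ 86*E + 5*(r*|P - (d11 + d22 + d33)|) + (t+r)*|P - (d11 + d22 + d33)| := by
    by_cases htr0 : t + r = 0
    · have ht0 : t = 0 := by linarith
      have hr0 : r = 0 := by linarith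
      subst ht0; subst hr0
      simp only [sub_zero, abs_zero, zero_mul, zero_add, zero_sub, abs_neg]
      nlinarith [hL0, hL7, hB0, hE]
    · have htr : 0 < t + r := lt_of_le_of_ne (by linarith) (Ne.symm htr0)
      have hsP := stepP ht hr hx hE htr hx0 hx1 hx2' hS0 hS1 hS2 hS3 hw1a hw1b hw2a hw2c hw3b hw3c
      have hsQ := stepQx ht hr hx hE htr hx0 hx1 hx2' hS0 hS1 hS2 hS3 hw1a hw1b hw2a hw2c hw3b hw3c
      have hsWa := stepWa ht hr hE hx0 hx1 hx2' hS1 hS2 hw0a hw1a hw2a hw3a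
      have hsWb := stepWb ht hr hE hx0 hx1 hx2' hS1 hS3 hw0b hw1b hw2b hw3b
      have hsWc := stepWc ht hr hE hx0 hx1 hx2' hS2 hS3 hw0c hw1c hw2c hw3c
      have habstr : |t - r| ≤ t + r := by rw [abs_le]; constructor <;> linarith
      by_cases hr0 : r = 0
      · -- then x0 = x1 = x2 = 0 and t > 0
        subst hr0
        have hx00 : x0 = 0 := by nlinarith [sq_nonneg x0, sq_nonneg x1, sq_nonneg x2]
        have hx01 : x1 = 0 := by nlinarith [sq_nonneg x0, sq_nonneg x1, sq_nonneg x2]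
        have hx02 : x2 = 0 := by nlinarith [sq_nonneg x0, sq_nonneg x1, sq_nonneg x2]
        subst hx00; subst hx01; subst hx02
        simp only [zero_mul, add_zero, zero_add] at hS0 hS1 hS2 hS3
        rw [abs_mul, abs_of_nonneg ht] at hS0 hS1 hS2 hS3
        have habs : |t - 0| = t := by rw [sub_zero, abs_of_nonneg ht]
        rw [habs]
        have hD : t * |d11 + d22 + d33| ≤ t*|P| + t*|P - (d11 + d22 + d33)| := by
          have h1 : |d11 + d22 + d33| ≤ |P| + |P - (d11 + d22 + d33)| := by
            have h2 := abs_sub P (P - (d11 + d22 + d33))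
            have e : P - (P - (d11 + d22 + d33)) = d11 + d22 + d33 := by ring
            rw [e] at h2; exact h2
          nlinarith [h1, ht]
        nlinarith [hS0, hS1, hS2, hS3, hD, mul_nonneg hr hB0, hE, ht,
          mul_le_mul_of_nonneg_right (le_of_eq (rfl : t = t)) hB0]
      · have hrpos : 0 < r := lt_of_le_of_ne hr (Ne.symm hr0)
        have id1 : r^2 * p1 = x0 * (x0*p1 + x1*p2 + x2*p3)
            + (-x1) * (x0*p2 - x1*p1) + (-x2) * (x0*p3 - x2*p1) := by
          linear_combination (-p1) * hx
        have id2 : r^2 * p2 = x1 * (x0*p1 + x1*p2 + x2*p3)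
            + x0 * (x0*p2 - x1*p1) + (-x2) * (x1*p3 - x2*p2) := by
          linear_combination (-p2) * hx
        have id3 : r^2 * p3 = x2 * (x0*p1 + x1*p2 + x2*p3)
            + x0 * (x0*p3 - x2*p1) + x1 * (x1*p3 - x2*p2) := by
          linear_combination (-p3) * hx
        have hna : |(-x1 : ℝ)| ≤ r := by rw [abs_neg]; exact hx1
        have hnb : |(-x2 : ℝ)| ≤ r := by rw [abs_neg]; exact hx2'
        have hM1 := stepMgen hrpos id1 hx0 hna hnb hsQ hsWa hsWb
        have hM2 := stepMgen hrpos id2 hx1 hx0 hnb hsQ hsWa hsWc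
        have hM3 := stepMgen hrpos id3 hx2' hx0 hx1 hsQ hsWb hsWc
        have hDbd : |t - r| * |d11 + d22 + d33|
            ≤ 10*E + r*|P - (d11 + d22 + d33)| + (t+r)*|P - (d11 + d22 + d33)| := by
          have h1 : |d11 + d22 + d33| ≤ |P| + |P - (d11 + d22 + d33)| := by
            have h2 := abs_sub P (P - (d11 + d22 + d33))
            have e : P - (P - (d11 + d22 + d33)) = d11 + d22 + d33 := by ring
            rw [e] at h2; exact h2
          have h2 : |t - r| * |d11 + d22 + d33|
              ≤ |t - r| * |P| + |t - r| * |P - (d11 + d22 + d33)| := by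
            have h3 := mul_le_mul_of_nonneg_left h1 (abs_nonneg (t - r))
            have h4 : |t - r| * (|P| + |P - (d11 + d22 + d33)|)
                = |t - r| * |P| + |t - r| * |P - (d11 + d22 + d33)| := by ring
            linarith only [h3, h4]
          have h3 : |t - r| * |P - (d11 + d22 + d33)| ≤ (t+r) * |P - (d11 + d22 + d33)| :=
            mul_le_mul_of_nonneg_right habstr hB0
          linarith only [hsP, h2, h3]
        have expand : |t - r| * ((|P| + |p1| + |p2| + |p3|) + |d11 + d22 + d33|)
            = |t - r| * |P| + |t - r| * |p1| + |t - r| * |p2| + |t - r| * |p3|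
              + |t - r| * |d11 + d22 + d33| := by ring
        rw [expand]
        linarith only [hsP, hM1, hM2, hM3, hDbd]
  calc jb (t - r) * ((|P| + |p1| + |p2| + |p3|) + |d11 + d22 + d33|)
      ≤ (1 + |t - r|) * ((|P| + |p1| + |p2| + |p3|) + |d11 + d22 + d33|) :=
        mul_le_mul_of_nonneg_right (jb_le_one_add _) hL0
    _ = ((|P| + |p1| + |p2| + |p3|) + |d11 + d22 + d33|)
        + |t - r| * ((|P| + |p1| + |p2| + |p3|) + |d11 + d22 + d33|) := by ring
    _ ≤ 200*E + 200 * jb (t+r) * |P - (d11 + d22 + d33)| := by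
        have hb1 : r * |P - (d11 + d22 + d33)| ≤ jb (t+r) * |P - (d11 + d22 + d33)| :=
          mul_le_mul_of_nonneg_right (by linarith) hB0
        have hb2 : (t+r) * |P - (d11 + d22 + d33)| ≤ jb (t+r) * |P - (d11 + d22 + d33)| :=
          mul_le_mul_of_nonneg_right hJtr hB0
        linarith only [hmain, hL7, hJB, hb1, hb2, hE]

/-- elementary pointwise estimate from the proof of Lemma 3.2.  For every
smooth scalar `h` on `ℝ×ℝ³` and every `(t,x)` with `t ≥ 0`,
`⟨t-r⟩(Σ_a |∂_a∂_t h| + |Δh|) ≤ C Σ_{|α|≤1} Σ_a |∂_a Γ^α h| + C⟨t+r⟩|□h|`. -/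
theorem stmt_11 :
    ∃ C : ℝ, 0 < C ∧
      ∀ (h : Pt → ℝ), ContDiff ℝ (⊤ : ℕ∞) h →
        ∀ (t : ℝ), 0 ≤ t → ∀ x : Sp,
          jb (t - rad x) *
              ((∑ a : Fin 4, |pd a (pd 0 h) (Fin.cons t x)|)
                + |∑ j : Fin 3, pd j.succ (pd j.succ h) (Fin.cons t x)|)
            ≤ C * ∑ m ∈ Finset.range 2, ∑ α : Fin m → Fin 8,
                ∑ a : Fin 4, |pd a (GamComp α h) (Fin.cons t x)|
              + C * jb (t + rad x) * |box1 h (Fin.cons t x)| := by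
  refine ⟨600, by norm_num, ?_⟩
  intro h hh t ht x
  set X : Pt := Fin.cons t x with hXdef
  set r : ℝ := rad x with hrdef
  have hr : 0 ≤ r := Real.sqrt_nonneg _
  have hx : (x 0)^2 + (x 1)^2 + (x 2)^2 = r^2 := by
    rw [hrdef, rad, Real.sq_sqrt (by positivity)]
    rw [Fin.sum_univ_three]
  have hc0 : X 0 = t := rfl
  have hc1 : X 1 = x 0 := rfl
  have hc2 : X 2 = x 1 := rfl
  have hc3 : X 3 = x 2 := rfl
  have sym : ∀ a b : Fin 4, pd a (pd b h) X = pd b (pd a h) X := fun a b => pd_symm hh a b X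
  set TOT := ∑ m ∈ Finset.range 2, ∑ α : Fin m → Fin 8,
      ∑ a : Fin 4, |pd a (GamComp α h) X| with hTOTdef
  have hsplit : TOT = (∑ a : Fin 4, |pd a h X|)
      + ∑ k : Fin 8, ∑ a : Fin 4, |pd a (Gam k h) X| := by
    have e0 : (∑ α : Fin 0 → Fin 8, ∑ a : Fin 4, |pd a (GamComp α h) X|)
        = ∑ a : Fin 4, |pd a h X| := by rw [Fintype.sum_unique]; rfl
    have e1 : (∑ α : Fin 1 → Fin 8, ∑ a : Fin 4, |pd a (GamComp α h) X|)
        = ∑ k : Fin 8, ∑ a : Fin 4, |pd a (Gam k h) X| :=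
      Fintype.sum_equiv (Equiv.funUnique (Fin 1) (Fin 8)) _ _ (fun α => rfl)
    rw [hTOTdef, Finset.sum_range_succ, Finset.sum_range_succ, Finset.sum_range_zero,
      zero_add, e0, e1]
  have hTOT0 : 0 ≤ TOT := by
    rw [hsplit]; positivity
  have hb_pd : ∀ (k : Fin 8) (a : Fin 4), |pd a (Gam k h) X| ≤ TOT := by
    intro k a
    rw [hsplit]
    have h1 : |pd a (Gam k h) X| ≤ ∑ a' : Fin 4, |pd a' (Gam k h) X| :=
      Finset.single_le_sum (f := fun a' => |pd a' (Gam k h) X|)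
        (fun i _ => abs_nonneg _) (Finset.mem_univ a)
    have h2 : (∑ a' : Fin 4, |pd a' (Gam k h) X|)
        ≤ ∑ k' : Fin 8, ∑ a' : Fin 4, |pd a' (Gam k' h) X| :=
      Finset.single_le_sum (f := fun k' => ∑ a' : Fin 4, |pd a' (Gam k' h) X|)
        (fun i _ => by positivity) (Finset.mem_univ k)
    have h3 : 0 ≤ ∑ a' : Fin 4, |pd a' h X| := by positivity
    linarith
  have hb_u : ∀ a : Fin 4, |pd a h X| ≤ TOT := by
    intro a
    rw [hsplit]
    have h1 : |pd a h X| ≤ ∑ a' : Fin 4, |pd a' h X| :=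
      Finset.single_le_sum (f := fun a' => |pd a' h X|)
        (fun i _ => abs_nonneg _) (Finset.mem_univ a)
    have h3 : 0 ≤ ∑ k' : Fin 8, ∑ a' : Fin 4, |pd a' (Gam k' h) X| := by positivity
    linarith
  -- scaling bounds
  have hscal : ∀ a : Fin 4, pd a (scal h) X = pd a h X +
      (X 0 * pd a (pd 0 h) X + X 1 * pd a (pd 1 h) X
        + X 2 * pd a (pd 2 h) X + X 3 * pd a (pd 3 h) X) := by
    intro a; rw [pd_scal hh a X, Fin.sum_univ_four]
  have hS0 : |t * pd 0 (pd 0 h) X + (x 0 * pd 1 (pd 0 h) X + x 1 * pd 2 (pd 0 h) X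
      + x 2 * pd 3 (pd 0 h) X)| ≤ 3 * TOT := by
    have e : t * pd 0 (pd 0 h) X + (x 0 * pd 1 (pd 0 h) X + x 1 * pd 2 (pd 0 h) X
        + x 2 * pd 3 (pd 0 h) X) = pd 0 (Gam 7 h) X - pd 0 h X := by
      rw [show Gam 7 = scal from rfl, hscal 0, hc0, hc1, hc2, hc3,
        sym 0 1, sym 0 2, sym 0 3]
      ring
    rw [e]
    have htri := abs_sub (pd 0 (Gam 7 h) X) (pd 0 h X)
    linarith [hb_pd 7 0, hb_u 0, hTOT0]
  have hS1 : |t * pd 1 (pd 0 h) X + (x 0 * pd 1 (pd 1 h) X + x 1 * pd 1 (pd 2 h) X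
      + x 2 * pd 1 (pd 3 h) X)| ≤ 3 * TOT := by
    have e : t * pd 1 (pd 0 h) X + (x 0 * pd 1 (pd 1 h) X + x 1 * pd 1 (pd 2 h) X
        + x 2 * pd 1 (pd 3 h) X) = pd 1 (Gam 7 h) X - pd 1 h X := by
      rw [show Gam 7 = scal from rfl, hscal 1, hc0, hc1, hc2, hc3]; ring
    rw [e]
    have htri := abs_sub (pd 1 (Gam 7 h) X) (pd 1 h X)
    linarith [hb_pd 7 1, hb_u 1, hTOT0]
  have hS2 : |t * pd 2 (pd 0 h) X + (x 0 * pd 1 (pd 2 h) X + x 1 * pd 2 (pd 2 h) X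
      + x 2 * pd 2 (pd 3 h) X)| ≤ 3 * TOT := by
    have e : t * pd 2 (pd 0 h) X + (x 0 * pd 1 (pd 2 h) X + x 1 * pd 2 (pd 2 h) X
        + x 2 * pd 2 (pd 3 h) X) = pd 2 (Gam 7 h) X - pd 2 h X := by
      rw [show Gam 7 = scal from rfl, hscal 2, hc0, hc1, hc2, hc3, sym 2 1]; ring
    rw [e]
    have htri := abs_sub (pd 2 (Gam 7 h) X) (pd 2 h X)
    linarith [hb_pd 7 2, hb_u 2, hTOT0]
  have hS3 : |t * pd 3 (pd 0 h) X + (x 0 * pd 1 (pd 3 h) X + x 1 * pd 2 (pd 3 h) X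
      + x 2 * pd 3 (pd 3 h) X)| ≤ 3 * TOT := by
    have e : t * pd 3 (pd 0 h) X + (x 0 * pd 1 (pd 3 h) X + x 1 * pd 2 (pd 3 h) X
        + x 2 * pd 3 (pd 3 h) X) = pd 3 (Gam 7 h) X - pd 3 h X := by
      rw [show Gam 7 = scal from rfl, hscal 3, hc0, hc1, hc2, hc3, sym 3 1, sym 3 2]; ring
    rw [e]
    have htri := abs_sub (pd 3 (Gam 7 h) X) (pd 3 h X)
    linarith [hb_pd 7 3, hb_u 3, hTOT0]
  -- rotation bounds
  have hw0a : |x 0 * pd 2 (pd 0 h) X - x 1 * pd 1 (pd 0 h) X| ≤ 3 * TOT := by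
    have e : x 0 * pd 2 (pd 0 h) X - x 1 * pd 1 (pd 0 h) X = pd 0 (Gam 4 h) X := by
      rw [show Gam 4 = rot 1 2 from rfl, pd_rot hh 1 2 0 X, hc1, hc2, sym 0 1, sym 0 2, if_neg (show ¬(1:Fin 4) = 0 by decide), if_neg (show ¬(2:Fin 4) = 0 by decide)]
      ring
    rw [e]; linarith [hb_pd 4 0, hTOT0]
  have hw0b : |x 0 * pd 3 (pd 0 h) X - x 2 * pd 1 (pd 0 h) X| ≤ 3 * TOT := by
    have e : x 0 * pd 3 (pd 0 h) X - x 2 * pd 1 (pd 0 h) X = pd 0 (Gam 5 h) X := by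
      rw [show Gam 5 = rot 1 3 from rfl, pd_rot hh 1 3 0 X, hc1, hc3, sym 0 1, sym 0 3, if_neg (show ¬(1:Fin 4) = 0 by decide), if_neg (show ¬(3:Fin 4) = 0 by decide)]
      ring
    rw [e]; linarith [hb_pd 5 0, hTOT0]
  have hw0c : |x 1 * pd 3 (pd 0 h) X - x 2 * pd 2 (pd 0 h) X| ≤ 3 * TOT := by
    have e : x 1 * pd 3 (pd 0 h) X - x 2 * pd 2 (pd 0 h) X = pd 0 (Gam 6 h) X := by
      rw [show Gam 6 = rot 2 3 from rfl, pd_rot hh 2 3 0 X, hc2, hc3, sym 0 2, sym 0 3, if_neg (show ¬(2:Fin 4) = 0 by decide), if_neg (show ¬(3:Fin 4) = 0 by decide)]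
      ring
    rw [e]; linarith [hb_pd 6 0, hTOT0]
  have hw1a : |x 0 * pd 1 (pd 2 h) X - x 1 * pd 1 (pd 1 h) X| ≤ 3 * TOT := by
    have e : x 0 * pd 1 (pd 2 h) X - x 1 * pd 1 (pd 1 h) X = pd 1 (Gam 4 h) X - pd 2 h X := by
      rw [show Gam 4 = rot 1 2 from rfl, pd_rot hh 1 2 1 X, hc1, hc2, if_pos rfl, if_neg (show ¬(2:Fin 4) = 1 by decide)]
      ring
    rw [e]
    have htri := abs_sub (pd 1 (Gam 4 h) X) (pd 2 h X)
    linarith [hb_pd 4 1, hb_u 2, hTOT0]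
  have hw1b : |x 0 * pd 1 (pd 3 h) X - x 2 * pd 1 (pd 1 h) X| ≤ 3 * TOT := by
    have e : x 0 * pd 1 (pd 3 h) X - x 2 * pd 1 (pd 1 h) X = pd 1 (Gam 5 h) X - pd 3 h X := by
      rw [show Gam 5 = rot 1 3 from rfl, pd_rot hh 1 3 1 X, hc1, hc3, if_pos rfl, if_neg (show ¬(3:Fin 4) = 1 by decide)]
      ring
    rw [e]
    have htri := abs_sub (pd 1 (Gam 5 h) X) (pd 3 h X)
    linarith [hb_pd 5 1, hb_u 3, hTOT0]
  have hw1c : |x 1 * pd 1 (pd 3 h) X - x 2 * pd 1 (pd 2 h) X| ≤ 3 * TOT := by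
    have e : x 1 * pd 1 (pd 3 h) X - x 2 * pd 1 (pd 2 h) X = pd 1 (Gam 6 h) X := by
      rw [show Gam 6 = rot 2 3 from rfl, pd_rot hh 2 3 1 X, hc2, hc3, if_neg (show ¬(2:Fin 4) = 1 by decide), if_neg (show ¬(3:Fin 4) = 1 by decide)]
      ring
    rw [e]; linarith [hb_pd 6 1, hTOT0]
  have hw2a : |x 0 * pd 2 (pd 2 h) X - x 1 * pd 1 (pd 2 h) X| ≤ 3 * TOT := by
    have e : x 0 * pd 2 (pd 2 h) X - x 1 * pd 1 (pd 2 h) X = pd 2 (Gam 4 h) X + pd 1 h X := by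
      rw [show Gam 4 = rot 1 2 from rfl, pd_rot hh 1 2 2 X, hc1, hc2, sym 2 1, if_neg (show ¬(1:Fin 4) = 2 by decide), if_pos rfl]
      ring
    rw [e]
    have htri := abs_add_le (pd 2 (Gam 4 h) X) (pd 1 h X)
    linarith [hb_pd 4 2, hb_u 1, hTOT0]
  have hw2b : |x 0 * pd 2 (pd 3 h) X - x 2 * pd 1 (pd 2 h) X| ≤ 3 * TOT := by
    have e : x 0 * pd 2 (pd 3 h) X - x 2 * pd 1 (pd 2 h) X = pd 2 (Gam 5 h) X := by
      rw [show Gam 5 = rot 1 3 from rfl, pd_rot hh 1 3 2 X, hc1, hc3, sym 2 1, if_neg (show ¬(1:Fin 4) = 2 by decide), if_neg (show ¬(3:Fin 4) = 2 by decide)]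
      ring
    rw [e]; linarith [hb_pd 5 2, hTOT0]
  have hw2c : |x 1 * pd 2 (pd 3 h) X - x 2 * pd 2 (pd 2 h) X| ≤ 3 * TOT := by
    have e : x 1 * pd 2 (pd 3 h) X - x 2 * pd 2 (pd 2 h) X = pd 2 (Gam 6 h) X - pd 3 h X := by
      rw [show Gam 6 = rot 2 3 from rfl, pd_rot hh 2 3 2 X, hc2, hc3, if_pos rfl, if_neg (show ¬(3:Fin 4) = 2 by decide)]
      ring
    rw [e]
    have htri := abs_sub (pd 2 (Gam 6 h) X) (pd 3 h X)
    linarith [hb_pd 6 2, hb_u 3, hTOT0]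
  have hw3a : |x 0 * pd 2 (pd 3 h) X - x 1 * pd 1 (pd 3 h) X| ≤ 3 * TOT := by
    have e : x 0 * pd 2 (pd 3 h) X - x 1 * pd 1 (pd 3 h) X = pd 3 (Gam 4 h) X := by
      rw [show Gam 4 = rot 1 2 from rfl, pd_rot hh 1 2 3 X, hc1, hc2, sym 3 2, sym 3 1, if_neg (show ¬(1:Fin 4) = 3 by decide), if_neg (show ¬(2:Fin 4) = 3 by decide)]
      ring
    rw [e]; linarith [hb_pd 4 3, hTOT0]
  have hw3b : |x 0 * pd 3 (pd 3 h) X - x 2 * pd 1 (pd 3 h) X| ≤ 3 * TOT := by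
    have e : x 0 * pd 3 (pd 3 h) X - x 2 * pd 1 (pd 3 h) X = pd 3 (Gam 5 h) X + pd 1 h X := by
      rw [show Gam 5 = rot 1 3 from rfl, pd_rot hh 1 3 3 X, hc1, hc3, sym 3 1, if_neg (show ¬(1:Fin 4) = 3 by decide), if_pos rfl]
      ring
    rw [e]
    have htri := abs_add_le (pd 3 (Gam 5 h) X) (pd 1 h X)
    linarith [hb_pd 5 3, hb_u 1, hTOT0]
  have hw3c : |x 1 * pd 3 (pd 3 h) X - x 2 * pd 2 (pd 3 h) X| ≤ 3 * TOT := by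
    have e : x 1 * pd 3 (pd 3 h) X - x 2 * pd 2 (pd 3 h) X = pd 3 (Gam 6 h) X + pd 2 h X := by
      rw [show Gam 6 = rot 2 3 from rfl, pd_rot hh 2 3 3 X, hc2, hc3, sym 3 2, if_neg (show ¬(2:Fin 4) = 3 by decide), if_pos rfl]
      ring
    rw [e]
    have htri := abs_add_le (pd 3 (Gam 6 h) X) (pd 2 h X)
    linarith [hb_pd 6 3, hb_u 2, hTOT0]
  -- plain second-derivative bounds
  have hP' : |pd 0 (pd 0 h) X| ≤ 3 * TOT := by
    have h1 : |pd 0 (pd 0 h) X| ≤ TOT := hb_pd 0 0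
    linarith [hTOT0]
  have hp1' : |pd 1 (pd 0 h) X| ≤ 3 * TOT := by
    have h1 : |pd 1 (pd 0 h) X| ≤ TOT := hb_pd 0 1
    linarith [hTOT0]
  have hp2' : |pd 2 (pd 0 h) X| ≤ 3 * TOT := by
    have h1 : |pd 2 (pd 0 h) X| ≤ TOT := hb_pd 0 2
    linarith [hTOT0]
  have hp3' : |pd 3 (pd 0 h) X| ≤ 3 * TOT := by
    have h1 : |pd 3 (pd 0 h) X| ≤ TOT := hb_pd 0 3
    linarith [hTOT0]
  have hd11' : |pd 1 (pd 1 h) X| ≤ 3 * TOT := by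
    have h1 : |pd 1 (pd 1 h) X| ≤ TOT := hb_pd 1 1
    linarith [hTOT0]
  have hd22' : |pd 2 (pd 2 h) X| ≤ 3 * TOT := by
    have h1 : |pd 2 (pd 2 h) X| ≤ TOT := hb_pd 2 2
    linarith [hTOT0]
  have hd33' : |pd 3 (pd 3 h) X| ≤ 3 * TOT := by
    have h1 : |pd 3 (pd 3 h) X| ≤ TOT := hb_pd 3 3
    linarith [hTOT0]
  have hE3 : (0:ℝ) ≤ 3 * TOT := by linarith
  have KEY := key_s11 t r (x 0) (x 1) (x 2) ht hr hx
    (pd 0 (pd 0 h) X) (pd 1 (pd 0 h) X) (pd 2 (pd 0 h) X) (pd 3 (pd 0 h) X)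
    (pd 1 (pd 1 h) X) (pd 2 (pd 2 h) X) (pd 3 (pd 3 h) X)
    (pd 1 (pd 2 h) X) (pd 1 (pd 3 h) X) (pd 2 (pd 3 h) X)
    (3 * TOT) hE3 hP' hp1' hp2' hp3' hd11' hd22' hd33'
    hS0 hS1 hS2 hS3 hw0a hw0b hw0c hw1a hw1b hw1c hw2a hw2b hw2c hw3a hw3b hw3c
  have eL1 : (∑ a : Fin 4, |pd a (pd 0 h) X|)
      = |pd 0 (pd 0 h) X| + |pd 1 (pd 0 h) X| + |pd 2 (pd 0 h) X| + |pd 3 (pd 0 h) X| := by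
    rw [Fin.sum_univ_four]
  have eL2 : (∑ j : Fin 3, pd j.succ (pd j.succ h) X)
      = pd 1 (pd 1 h) X + pd 2 (pd 2 h) X + pd 3 (pd 3 h) X := by
    rw [Fin.sum_univ_three]; rfl
  have eBox : box1 h X = pd 0 (pd 0 h) X
      - (pd 1 (pd 1 h) X + pd 2 (pd 2 h) X + pd 3 (pd 3 h) X) := by
    show pd 0 (pd 0 h) X - (∑ j : Fin 3, pd j.succ (pd j.succ h) X) = _
    rw [eL2]
  rw [eL1, eL2, eBox]
  have hJB : (0:ℝ) ≤ jb (t + r) * |pd 0 (pd 0 h) X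
      - (pd 1 (pd 1 h) X + pd 2 (pd 2 h) X + pd 3 (pd 3 h) X)| := by
    have := one_le_jb (t + r)
    have := abs_nonneg (pd 0 (pd 0 h) X
      - (pd 1 (pd 1 h) X + pd 2 (pd 2 h) X + pd 3 (pd 3 h) X))
    nlinarith
  linarith [KEY, hJB]
end
end
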